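/- arXiv:2605.29152 — 3 statements merged into one kernel-verified Lean document; each statement's English description precedes it below -/
import Mathlib

section
/- For the simultaneous Euclidean updates U⁺ = U - η·G V^T and V⁺ = V - η·U^T G (no weight decay), the imbalance changes exactly at second order: (U⁺)^T U⁺ - V⁺(V⁺)^T - (U^T U - V V^T) = η²·(V G^T G V^T - U^T G G^T U). In particular all first-order terms in η cancel. -/
open Matrix

/-- **Two-factor finite-step leakage is second order.**
For `U⁺ = U - η G Vᵀ`, `V⁺ = V - η Uᵀ G`, exactly
`(U⁺)ᵀU⁺ - V⁺(V⁺)ᵀ - (UᵀU - VVᵀ) = η²(V Gᵀ G Vᵀ - Uᵀ G Gᵀ U)`: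
all first-order terms in `η` cancel. -/
theorem finite_step_leakage_second_order
    {m r n : ℕ} (η : ℝ)
    (U : Matrix (Fin m) (Fin r) ℝ)
    (V : Matrix (Fin r) (Fin n) ℝ)
    (G : Matrix (Fin m) (Fin n) ℝ)
    (Uplus : Matrix (Fin m) (Fin r) ℝ) (hU : Uplus = U - η • (G * Vᵀ))
    (Vplus : Matrix (Fin r) (Fin n) ℝ) (hV : Vplus = V - η • (Uᵀ * G)) :
    Uplusᵀ * Uplus - Vplus * Vplusᵀ - (Uᵀ * U - V * Vᵀ)
      = η ^ 2 • (V * Gᵀ * G * Vᵀ - Uᵀ * G * Gᵀ * U) := by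
  subst hU hV
  simp only [transpose_sub, transpose_smul, transpose_mul, transpose_transpose,
    Matrix.sub_mul, Matrix.mul_sub, Matrix.smul_mul, Matrix.mul_smul, smul_mul_assoc, mul_smul_comm, smul_smul, smul_sub,
    Matrix.mul_assoc, sq]
  abel
end

section
/- Let W₁, …, W_L be matrices with W_j ∈ ℝ^{d_j × d_{j-1}} evolving by the deep linear gradient flow W_j' = -A_j^T G B_j^T, where A_j = W_L ⋯ W_{j+1}, B_j = W_{j-1} ⋯ W_1 (empty products are identities) and G = G(t) is continuous. Then for each j = 1, …, L-1 the adjacent imbalance D_j = W_j W_j^T - W_{j+1}^T W_{j+1} is constant in time. -/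
/-!
Write `X_j = -A_jᵀ G B_jᵀ` for the velocity of layer `j`. Since `A_j = A_{j+1} W_{j+1}` and
`B_{j+1} = W_j B_j`, both `X_j W_jᵀ` and `W_{j+1}ᵀ X_{j+1}` equal `-W_{j+1}ᵀ A_{j+1}ᵀ G B_jᵀ W_jᵀ`.
Adding transposes, `d/dt (W_j W_jᵀ) = X_j W_jᵀ + W_j X_jᵀ` coincides with
`d/dt (W_{j+1}ᵀ W_{j+1}) = X_{j+1}ᵀ W_{j+1} + W_{j+1}ᵀ X_{j+1}`, so their difference is constant.
-/

open Matrix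

section EntrywiseDeriv

variable {𝕜 : Type*} [NontriviallyNormedField 𝕜] {l m n : Type*} {t : 𝕜}

theorem Matrix.hasDerivAt_mul_apply [Fintype m] {M : 𝕜 → Matrix l m 𝕜} {N : 𝕜 → Matrix m n 𝕜}
    {M' : Matrix l m 𝕜} {N' : Matrix m n 𝕜}
    (hM : ∀ i k, HasDerivAt (fun s => M s i k) (M' i k) t)
    (hN : ∀ i k, HasDerivAt (fun s => N s i k) (N' i k) t) (i : l) (k : n) :
    HasDerivAt (fun s => (M s * N s) i k) ((M' * N t + M t * N') i k) t := by
  simp only [mul_apply, add_apply, ← Finset.sum_add_distrib]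
  exact HasDerivAt.fun_sum fun j _ => (hM i j).mul (hN j k)

variable {W : 𝕜 → Matrix m n 𝕜} {W' : Matrix m n 𝕜}

theorem Matrix.hasDerivAt_mul_transpose_self_apply [Fintype n]
    (hW : ∀ i k, HasDerivAt (fun s => W s i k) (W' i k) t) (i k : m) :
    HasDerivAt (fun s => (W s * (W s)ᵀ) i k) ((W' * (W t)ᵀ + W t * W'ᵀ) i k) t :=
  hasDerivAt_mul_apply hW (fun i k => hW k i) i k

theorem Matrix.hasDerivAt_transpose_mul_self_apply [Fintype m]
    (hW : ∀ i k, HasDerivAt (fun s => W s i k) (W' i k) t) (i k : n) :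
    HasDerivAt (fun s => ((W s)ᵀ * W s) i k) ((W'ᵀ * W t + (W t)ᵀ * W') i k) t :=
  hasDerivAt_mul_apply (fun i k => hW k i) hW i k

end EntrywiseDeriv

theorem Matrix.eq_of_hasDerivAt_apply_zero {𝕜 : Type*} [RCLike 𝕜] {m n : Type*}
    {M : 𝕜 → Matrix m n 𝕜} (hM : ∀ s i k, HasDerivAt (fun s => M s i k) 0 s) (t t' : 𝕜) :
    M t = M t' := by
  ext i k
  exact is_const_of_deriv_eq_zero (fun s => (hM s i k).differentiableAt)
    (fun s => (hM s i k).deriv) t t'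

section Imbalance

variable {R : Type*} [CommRing R] {m₀ m₁ m₂ p q : Type*}
  [Fintype m₀] [Fintype m₂] [Fintype p] [Fintype q]
  (A : Matrix q m₂ R) (W₂ : Matrix m₂ m₁ R) (W₁ : Matrix m₁ m₀ R)
  (G : Matrix q p R) (B : Matrix m₀ p R)

theorem gradient_mul_transpose_eq_transpose_mul_gradient :
    -((A * W₂)ᵀ * G * Bᵀ) * W₁ᵀ = W₂ᵀ * -(Aᵀ * G * (W₁ * B)ᵀ) := by
  simp only [transpose_mul, Matrix.neg_mul, Matrix.mul_neg, Matrix.mul_assoc]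

theorem gradient_imbalance_cancel [Fintype m₁] :
    -((A * W₂)ᵀ * G * Bᵀ) * W₁ᵀ + W₁ * (-((A * W₂)ᵀ * G * Bᵀ))ᵀ
      = (-(Aᵀ * G * (W₁ * B)ᵀ))ᵀ * W₂ + W₂ᵀ * -(Aᵀ * G * (W₁ * B)ᵀ) := by
  have h := gradient_mul_transpose_eq_transpose_mul_gradient A W₂ W₁ G B
  have hT : W₁ * (-((A * W₂)ᵀ * G * Bᵀ))ᵀ = (-(Aᵀ * G * (W₁ * B)ᵀ))ᵀ * W₂ := by
    simpa only [transpose_mul, transpose_transpose] using congrArg transpose h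
  rw [h, hT, add_comm]

end Imbalance

theorem deep_linear_flow_preserves_adjacent_imbalances_general
    (d : ℕ → ℕ) (L : ℕ)
    (W : ℝ → ∀ j : ℕ, Matrix (Fin (d (j + 1))) (Fin (d j)) ℝ)
    (A : ℝ → ∀ j : ℕ, Matrix (Fin (d L)) (Fin (d j)) ℝ)
    (B : ℝ → ∀ j : ℕ, Matrix (Fin (d j)) (Fin (d 0)) ℝ)
    (G : ℝ → Matrix (Fin (d L)) (Fin (d 0)) ℝ)
    (hArec : ∀ t, ∀ j < L, A t j = A t (j + 1) * W t j)
    (hBrec : ∀ t, ∀ j < L, B t (j + 1) = W t j * B t j)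
    (hW : ∀ t, ∀ j < L, ∀ i k,
      HasDerivAt (fun s => W s j i k)
        ((-((A t (j + 1))ᵀ * G t * (B t j)ᵀ)) i k) t) :
    ∀ j : ℕ, j + 1 < L → ∀ t : ℝ,
      W t j * (W t j)ᵀ - (W t (j + 1))ᵀ * W t (j + 1)
        = W 0 j * (W 0 j)ᵀ - (W 0 (j + 1))ᵀ * W 0 (j + 1) := by
  intro j hj t
  have hj' : j < L := by omega
  refine eq_of_hasDerivAt_apply_zero
    (M := fun s => W s j * (W s j)ᵀ - (W s (j + 1))ᵀ * W s (j + 1)) (fun s i k => ?_) t 0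
  have hlower := hasDerivAt_mul_transpose_self_apply (hW s j hj') i k
  have hupper := hasDerivAt_transpose_mul_self_apply (hW s (j + 1) hj) i k
  have hcancel := gradient_imbalance_cancel (A s (j + 2)) (W s (j + 1)) (W s j) (G s) (B s j)
  rw [← hArec s (j + 1) hj, ← hBrec s j hj'] at hcancel
  simpa only [Matrix.sub_apply, hcancel, sub_self] using hlower.fun_sub hupper

/-- **Deep linear gradient flow preserves adjacent imbalances.**
Layers `W j : d(j+1) × d(j)` (0-indexed, `j < L`) evolve by `W_j' = -A_jᵀ G B_jᵀ`,
where `A` and `B` are the partial products above and below layer `j`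
(characterized by their defining recursions, with empty products the identity)
and `G(t)` is continuous.  Then every adjacent imbalance
`D_j = W_j W_jᵀ - W_{j+1}ᵀ W_{j+1}` is constant in time. -/
theorem deep_linear_flow_preserves_adjacent_imbalances
    (d : ℕ → ℕ) (L : ℕ)
    (W : ℝ → ∀ j : ℕ, Matrix (Fin (d (j + 1))) (Fin (d j)) ℝ)
    (A : ℝ → ∀ j : ℕ, Matrix (Fin (d L)) (Fin (d j)) ℝ)
    (B : ℝ → ∀ j : ℕ, Matrix (Fin (d j)) (Fin (d 0)) ℝ)
    (G : ℝ → Matrix (Fin (d L)) (Fin (d 0)) ℝ)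
    (hG : ∀ i k, Continuous (fun t => G t i k))
    (hAtop : ∀ t, A t L = 1)
    (hArec : ∀ t, ∀ j < L, A t j = A t (j + 1) * W t j)
    (hBbot : ∀ t, B t 0 = 1)
    (hBrec : ∀ t, ∀ j < L, B t (j + 1) = W t j * B t j)
    (hW : ∀ t, ∀ j < L, ∀ i k,
      HasDerivAt (fun s => W s j i k)
        ((-((A t (j + 1))ᵀ * G t * (B t j)ᵀ)) i k) t) :
    ∀ j : ℕ, j + 1 < L → ∀ t : ℝ,
      W t j * (W t j)ᵀ - (W t (j + 1))ᵀ * W t (j + 1)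
        = W 0 j * (W 0 j)ᵀ - (W 0 (j + 1))ᵀ * W 0 (j + 1) :=
  deep_linear_flow_preserves_adjacent_imbalances_general d L W A B G hArec hBrec hW
end

section
/- Consider simultaneous discrete updates W_j⁺ = W_j - η H_j for j = 1,…,L, with H_j = A_j^T G B_j^T as above (all evaluated at the current iterate). Then for each j < L, the adjacent imbalance satisfies exactly D_j⁺ - D_j = η²·(H_j H_j^T - H_{j+1}^T H_{j+1}); all first-order terms in η cancel. -/
open Matrix

/-- **Deep finite-step leakage is second order.**
For simultaneous updates `W_j⁺ = W_j - η H_j` with `H_j = A_jᵀ G B_jᵀ` induced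
by a shared product-space gradient `G`, every adjacent imbalance satisfies
exactly `D_j⁺ - D_j = η² (H_j H_jᵀ - H_{j+1}ᵀ H_{j+1})`: all first-order terms
in `η` cancel. -/
theorem deep_finite_step_leakage_second_order
    (d : ℕ → ℕ) (L : ℕ) (η : ℝ)
    (W : ∀ j : ℕ, Matrix (Fin (d (j + 1))) (Fin (d j)) ℝ)
    (A : ∀ j : ℕ, Matrix (Fin (d L)) (Fin (d j)) ℝ)
    (B : ∀ j : ℕ, Matrix (Fin (d j)) (Fin (d 0)) ℝ)
    (G : Matrix (Fin (d L)) (Fin (d 0)) ℝ)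
    (hAtop : A L = 1)
    (hArec : ∀ j < L, A j = A (j + 1) * W j)
    (hBbot : B 0 = 1)
    (hBrec : ∀ j < L, B (j + 1) = W j * B j)
    (H : ∀ j : ℕ, Matrix (Fin (d (j + 1))) (Fin (d j)) ℝ)
    (hH : ∀ j : ℕ, H j = (A (j + 1))ᵀ * G * (B j)ᵀ)
    (Wplus : ∀ j : ℕ, Matrix (Fin (d (j + 1))) (Fin (d j)) ℝ)
    (hWplus : ∀ j : ℕ, Wplus j = W j - η • H j) :
    ∀ j : ℕ, j + 1 < L →
      (Wplus j * (Wplus j)ᵀ - (Wplus (j + 1))ᵀ * Wplus (j + 1))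
          - (W j * (W j)ᵀ - (W (j + 1))ᵀ * W (j + 1))
        = η ^ 2 • (H j * (H j)ᵀ - (H (j + 1))ᵀ * H (j + 1)) := by
  intro j hj
  have hjL : j < L := Nat.lt_of_succ_lt hj
  have key1 : H j * (W j)ᵀ = (W (j + 1))ᵀ * H (j + 1) := by
    rw [hH, hH, hBrec j hjL, hArec (j + 1) hj]
    simp [Matrix.transpose_mul, Matrix.mul_assoc]
  have key2 : W j * (H j)ᵀ = (H (j + 1))ᵀ * W (j + 1) := by
    have := congrArg Matrix.transpose key1
    simpa [Matrix.transpose_mul] using this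
  rw [hWplus, hWplus]
  simp only [Matrix.transpose_sub, Matrix.transpose_smul, Matrix.sub_mul, Matrix.mul_sub,
    Matrix.smul_mul, Matrix.mul_smul, smul_smul, smul_sub]
  rw [key1, key2]
  rw [pow_two]
  abel
end
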